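/- Let M be a topological space, f : M → M a homeomorphism, and k ≥ 1 a natural number. Then the map T(f^k) → T(f) between mapping tori induced by (x, t) ↦ (x, k·t) is well defined and is a covering map, each of whose fibers has cardinality exactly k. (In particular, the mapping torus of f is finitely covered by the mapping torus of f^k for every k ≥ 1.) -/

import Mathlib

/-- Self-homeomorphisms of a space form a group under composition, so that `f ^ n` makes
sense for `n : ℤ` (or `n : ℕ`). -/
instance Homeomorph.instGroupSelf {M : Type*} [TopologicalSpace M] : Group (M ≃ₜ M) where
  mul f g := g.trans f
  one := Homeomorph.refl M
  inv := Homeomorph.symm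
  mul_assoc f g h := Homeomorph.ext fun _ => rfl
  one_mul f := Homeomorph.ext fun _ => rfl
  mul_one f := Homeomorph.ext fun _ => rfl
  inv_mul_cancel f := Homeomorph.ext fun x => f.symm_apply_apply x

/-- The mapping torus `T(f)` of a self-homeomorphism `f` of a topological space `M`: the
quotient of `M × ℝ` (with the product topology) by the `ℤ`-action `n • (x, t) = (fⁿ x, t - n)`,
endowed with the quotient topology. -/
def MappingTorus {M : Type*} [TopologicalSpace M] (f : M ≃ₜ M) : Type _ :=
  Quot (fun p q : M × ℝ => ∃ n : ℤ, q = ((f ^ n) p.1, p.2 - n))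

instance {M : Type*} [TopologicalSpace M] (f : M ≃ₜ M) : TopologicalSpace (MappingTorus f) :=
  inferInstanceAs (TopologicalSpace (Quot _))

/-!
Rescaling time by `k` identifies `T(f^k)` with the quotient of `M × ℝ` by the subgroup `kℤ` of
the deck group `ℤ`, so `T(f^k) → T(f)` is the quotient by the residual action of `ℤ/k`, generated
by `[x, t] ↦ [f x, t - 1/k]`. Two points of `T(f^k)` whose times differ by less than `1/k` are
related only by the trivial element, so every point has a neighbourhood disjoint from its
translates, and Mathlib's criterion `IsAddQuotientCoveringMap` gives a covering map whose fibres
are `ℤ/k`-torsors.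
-/

theorem Homeomorph.zpow_add_apply {M : Type*} [TopologicalSpace M] (f : M ≃ₜ M) (m n : ℤ)
    (x : M) : (f ^ (m + n)) x = (f ^ m) ((f ^ n) x) := by
  rw [zpow_add]; rfl

namespace MappingTorus

open Topology Homeomorph

variable {M : Type*} [TopologicalSpace M]

def mk (f : M ≃ₜ M) : M × ℝ → MappingTorus f := Quot.mk _

theorem mk_eq_mk_iff (f : M ≃ₜ M) {p q : M × ℝ} :
    mk f p = mk f q ↔ ∃ n : ℤ, q = ((f ^ n) p.1, p.2 - n) := by
  refine Quot.eq.trans (Equivalence.eqvGen_iff ⟨fun p ↦ ⟨0, by simp⟩, ?_, ?_⟩)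
  · rintro p _ ⟨n, rfl⟩
    refine ⟨-n, Prod.ext ?_ (by simp)⟩
    rw [← zpow_add_apply, neg_add_cancel, zpow_zero]; rfl
  · rintro p _ _ ⟨m, rfl⟩ ⟨n, rfl⟩
    refine ⟨n + m, Prod.ext (zpow_add_apply f n m p.1).symm ?_⟩
    push_cast; ring

theorem isQuotientMap_mk (f : M ≃ₜ M) : IsQuotientMap (mk f) := isQuotientMap_quot_mk

@[elab_as_elim]
theorem ind {f : M ≃ₜ M} {P : MappingTorus f → Prop} (h : ∀ p, P (mk f p))
    (e : MappingTorus f) : P e :=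
  Quot.ind h e

theorem isOpenMap_mk (f : M ≃ₜ M) : IsOpenMap (mk f) := by
  intro W hW
  have hsat : mk f ⁻¹' (mk f '' W) =
      ⋃ n : ℤ, ((f ^ n).prodCongr (Homeomorph.subRight (n : ℝ))) '' W := by
    ext p
    simp only [Set.mem_preimage, Set.mem_image, Set.mem_iUnion, mk_eq_mk_iff]
    constructor
    · rintro ⟨w, hw, n, rfl⟩
      exact ⟨n, w, hw, rfl⟩
    · rintro ⟨n, w, hw, rfl⟩
      exact ⟨w, hw, n, rfl⟩
  rw [← (isQuotientMap_mk f).isOpen_preimage, hsat]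
  exact isOpen_iUnion fun n ↦ (Homeomorph.isOpenMap _) W hW

variable (f : M ≃ₜ M) (k : ℕ)

def powCover : MappingTorus (f ^ k) → MappingTorus f :=
  Quot.map (fun p ↦ (p.1, k * p.2)) <| by
    rintro p _ ⟨m, rfl⟩
    refine ⟨k * m, Prod.ext ?_ ?_⟩
    · rw [← zpow_natCast, ← zpow_mul]
    · push_cast; ring

theorem powCover_mk (p : M × ℝ) : powCover f k (mk _ p) = mk f (p.1, k * p.2) := rfl

theorem continuous_powCover : Continuous (powCover f k) :=
  continuous_quot_map _ (by fun_prop)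

noncomputable def shift (n : ℤ) : MappingTorus (f ^ k) → MappingTorus (f ^ k) :=
  Quot.map (fun p ↦ ((f ^ n) p.1, p.2 - n / k)) <| by
    rintro p _ ⟨m, rfl⟩
    refine ⟨m, Prod.ext ?_ ?_⟩
    · exact DFunLike.congr_fun (((Commute.refl f).pow_left k).zpow_zpow m n).eq.symm p.1
    · ring

theorem shift_mk (n : ℤ) (p : M × ℝ) :
    shift f k n (mk _ p) = mk _ ((f ^ n) p.1, p.2 - n / k) := rfl

theorem continuous_shift (n : ℤ) : Continuous (shift f k n) :=
  continuous_quot_map _ (by fun_prop)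

theorem shift_zero : shift f k 0 = id := by
  ext e
  induction e using ind with | h p
  simp [shift_mk]

theorem shift_add (m n : ℤ) : shift f k (m + n) = shift f k m ∘ shift f k n := by
  ext e
  induction e using ind with | h p
  simp only [Function.comp_apply, shift_mk, zpow_add_apply]
  congr 2
  push_cast; ring

variable [NeZero k]

theorem powCover_shift (n : ℤ) (e : MappingTorus (f ^ k)) :
    powCover f k (shift f k n e) = powCover f k e := by
  induction e using ind with | h p
  rw [shift_mk, powCover_mk, powCover_mk, mk_eq_mk_iff]
  have hk : (k : ℝ) ≠ 0 := Nat.cast_ne_zero.mpr (NeZero.ne k)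
  refine ⟨-n, Prod.ext ?_ ?_⟩
  · rw [← zpow_add_apply, neg_add_cancel, zpow_zero]; rfl
  · field_simp; push_cast; ring

theorem shift_mul_self (c : ℤ) : shift f k (k * c) = id := by
  ext e
  induction e using ind with | h p
  have hk : (k : ℝ) ≠ 0 := Nat.cast_ne_zero.mpr (NeZero.ne k)
  refine (shift_mk f k _ p).trans ((mk_eq_mk_iff _).mpr ⟨c, Prod.ext ?_ ?_⟩).symm
  · rw [zpow_mul, zpow_natCast]
  · field_simp; push_cast; ring

theorem shift_congr {m n : ℤ} (h : (m : ZMod k) = n) : shift f k m = shift f k n := by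
  obtain ⟨c, hc⟩ := (ZMod.intCast_eq_intCast_iff_dvd_sub m n k).mp h
  rw [show n = m + k * c by omega, shift_add, shift_mul_self, Function.comp_id]

noncomputable instance : AddAction (ZMod k) (MappingTorus (f ^ k)) where
  vadd j := shift f k j.val
  zero_vadd e := by
    show shift f k _ e = e
    rw [ZMod.val_zero, Nat.cast_zero, shift_zero, id]
  add_vadd i j e := by
    show shift f k _ e = shift f k _ (shift f k _ e)
    rw [← Function.comp_apply (f := shift f k _), ← shift_add]
    exact congrFun (shift_congr f k (by simp)) e

theorem intCast_vadd (n : ℤ) (e : MappingTorus (f ^ k)) :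
    (n : ZMod k) +ᵥ e = shift f k n e :=
  congrFun (shift_congr f k (by simp)) e

theorem exists_shift_eq_of_powCover_eq {e e' : MappingTorus (f ^ k)}
    (h : powCover f k e = powCover f k e') : ∃ n : ℤ, shift f k n e = e' := by
  induction e using ind with | h p
  induction e' using ind with | h q
  obtain ⟨n, hn⟩ := (mk_eq_mk_iff f).mp h
  have hk : (k : ℝ) ≠ 0 := Nat.cast_ne_zero.mpr (NeZero.ne k)
  refine ⟨n, congrArg (mk _) (Prod.ext (congrArg Prod.fst hn).symm ?_)⟩
  have := congrArg Prod.snd hn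
  field_simp at this ⊢
  linarith

theorem powCover_eq_powCover_iff {e e' : MappingTorus (f ^ k)} :
    powCover f k e = powCover f k e' ↔ e ∈ AddAction.orbit (ZMod k) e' := by
  refine ⟨fun h ↦ ?_, fun ⟨j, hj⟩ ↦ hj ▸ powCover_shift f k _ e'⟩
  obtain ⟨n, hn⟩ := exists_shift_eq_of_powCover_eq f k h.symm
  exact ⟨n, (intCast_vadd f k n e').trans hn⟩

theorem intCast_eq_zero_of_shift_mk_eq {n : ℤ} {p q : M × ℝ}
    (h : shift f k n (mk _ p) = mk _ q) (hpq : dist p.2 q.2 < 1 / k) : (n : ZMod k) = 0 := by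
  obtain ⟨m, hm⟩ := (mk_eq_mk_iff _).mp h
  have hk : (0 : ℝ) < k := Nat.cast_pos.mpr (Nat.pos_of_neZero k)
  have hnm : ((n + k * m : ℤ) : ℝ) = k * (p.2 - q.2) := by
    rw [hm]; field_simp; push_cast; ring
  have : |((n + k * m : ℤ) : ℝ)| < 1 := by
    rw [hnm, abs_mul, Nat.abs_cast, ← Real.dist_eq]
    calc (k : ℝ) * dist p.2 q.2 < k * (1 / k) := by gcongr
      _ = 1 := by field_simp
  rw [ZMod.intCast_zmod_eq_zero_iff_dvd]
  exact ⟨-m, by linarith [Int.abs_lt_one_iff.mp (by exact_mod_cast this)]⟩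

theorem exists_mem_nhds_vadd_inter_nonempty (e : MappingTorus (f ^ k)) :
    ∃ U ∈ 𝓝 e, ∀ j : ZMod k, ((j +ᵥ ·) '' U ∩ U).Nonempty → j = 0 := by
  induction e using ind with | h p
  have hk : (0 : ℝ) < k := Nat.cast_pos.mpr (Nat.pos_of_neZero k)
  refine ⟨mk _ '' (Set.univ ×ˢ Metric.ball p.2 (1 / (2 * k))), (isOpenMap_mk _).image_mem_nhds
    (prod_mem_nhds Filter.univ_mem (Metric.ball_mem_nhds _ (by positivity))), ?_⟩
  rintro j ⟨_, ⟨_, ⟨q, ⟨-, hq⟩, rfl⟩, rfl⟩, q', ⟨-, hq'⟩, hqq'⟩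
  rw [← ZMod.natCast_zmod_val j, ← Int.cast_natCast]
  refine intCast_eq_zero_of_shift_mk_eq f k hqq'.symm ?_
  calc dist q.2 q'.2 ≤ dist q.2 p.2 + dist q'.2 p.2 := dist_triangle_right _ _ _
    _ < 1 / (2 * k) + 1 / (2 * k) := add_lt_add (Metric.mem_ball.mp hq) (Metric.mem_ball.mp hq')
    _ = 1 / k := by field_simp; ring

theorem isQuotientMap_powCover : IsQuotientMap (powCover f k) := by
  have hk : (k : ℝ) ≠ 0 := Nat.cast_ne_zero.mpr (NeZero.ne k)
  refine IsQuotientMap.of_comp (isQuotientMap_mk _).continuous (continuous_powCover f k) ?_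
  exact (isQuotientMap_mk f).comp
    ((Homeomorph.refl M).prodCongr (Homeomorph.mulLeft₀ (k : ℝ) hk)).isQuotientMap

theorem isAddQuotientCoveringMap_powCover : IsAddQuotientCoveringMap (powCover f k) (ZMod k) where
  toIsQuotientMap := isQuotientMap_powCover f k
  continuous_const_vadd j := continuous_shift f k j.val
  apply_eq_iff_mem_orbit := powCover_eq_powCover_iff f k
  disjoint := exists_mem_nhds_vadd_inter_nonempty f k

end MappingTorus

/-- Let `M` be a topological space, `f : M ≃ₜ M` a homeomorphism and
`k ≥ 1`. Then the map `T(f^k) → T(f)` induced by `(x, t) ↦ (x, k·t)` is well defined and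
is a covering map, each of whose fibers has cardinality exactly `k`. In particular, the
mapping torus of `f` is finitely covered by the mapping torus of `f^k`. -/
theorem stmt9 {M : Type*} [TopologicalSpace M] (f : M ≃ₜ M) (k : ℕ) (hk : 1 ≤ k) :
    ∃ F : MappingTorus (f ^ k) → MappingTorus f,
      (∀ (x : M) (t : ℝ), F (Quot.mk _ (x, t)) = Quot.mk _ (x, k * t)) ∧
      IsCoveringMap F ∧
      ∀ y : MappingTorus f, Nat.card (F ⁻¹' {y}) = k := by
  have : NeZero k := ⟨by omega⟩
  have hF := MappingTorus.isAddQuotientCoveringMap_powCover f k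
  refine ⟨MappingTorus.powCover f k, fun x t ↦ rfl, hF.isCoveringMap, fun y ↦ ?_⟩
  obtain ⟨e, rfl⟩ := hF.surjective y
  rw [Nat.card_congr (hF.fiberEquivAddGroup ⟨e, rfl⟩), Nat.card_zmod]
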